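/- arXiv:1708.03250 — 2 statements merged into one kernel-verified Lean document; each statement's English description precedes it below -/
import Mathlib

section
/- Let P_1, ..., P_k be faces of the unimodular simplex Δ_n = conv(0, e_1, ..., e_n) such that for every nonempty subset I of [k], dim(P_I) ≥ |I|. Then for every nonempty subset I of [k], the Minkowski sum P_I contains no lattice point in its relative interior. -/
open scoped Pointwise
open MeasureTheory Finset

def IsLatticePt {n : ℕ} (x : Fin n → ℝ) : Prop := ∀ i, ∃ z : ℤ, x i = (z : ℝ)

def IsLatticePolytope {n : ℕ} (P : Set (Fin n → ℝ)) : Prop :=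
  ∃ V : Finset (Fin n → ℝ), V.Nonempty ∧ (∀ v ∈ V, IsLatticePt v) ∧
    P = convexHull ℝ (V : Set (Fin n → ℝ))

noncomputable def adim {n : ℕ} (A : Set (Fin n → ℝ)) : ℕ :=
  Module.finrank ℝ (affineSpan ℝ A).direction

def relintLat {n : ℕ} (A : Set (Fin n → ℝ)) : Set (Fin n → ℝ) :=
  {x ∈ intrinsicInterior ℝ A | IsLatticePt x}

def intLat {n : ℕ} (A : Set (Fin n → ℝ)) : Set (Fin n → ℝ) :=
  {x ∈ interior A | IsLatticePt x}

noncomputable def mixedVol {n m : ℕ} (P : Fin m → Set (Fin n → ℝ)) : ℝ :=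
  ∑ I : Finset (Fin m), (-1 : ℝ) ^ (m - I.card) * (volume (∑ i ∈ I, P i)).toReal

/-- Pushing a relative interior point away from a point of the set stays in the set. -/
lemma push_mem_aux {n : ℕ} {s : Set (Fin n → ℝ)} {x y : Fin n → ℝ}
    (hx : x ∈ intrinsicInterior ℝ s) (hy : y ∈ s) :
    ∃ ε : ℝ, 0 < ε ∧ x + ε • (x - y) ∈ s := by
  rw [mem_intrinsicInterior] at hx
  obtain ⟨x', hx', hxx⟩ := hx
  have hxs : x ∈ affineSpan ℝ s := hxx ▸ x'.2
  have hys : y ∈ affineSpan ℝ s := subset_affineSpan ℝ s hy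
  have hmem : ∀ t : ℝ, x + t • (x - y) ∈ affineSpan ℝ s := by
    intro t
    have := AffineSubspace.smul_vsub_vadd_mem (affineSpan ℝ s) t hxs hys hxs
    simpa [vsub_eq_sub, vadd_eq_add, add_comm] using this
  set g : ℝ → affineSpan ℝ s := fun t => ⟨x + t • (x - y), hmem t⟩ with hg
  have hcont : Continuous g := by
    apply Continuous.subtype_mk
    continuity
  have hopen : IsOpen (g ⁻¹' interior ((↑) ⁻¹' s : Set <| affineSpan ℝ s)) :=
    isOpen_interior.preimage hcont
  have h0 : (0:ℝ) ∈ g ⁻¹' interior ((↑) ⁻¹' s : Set <| affineSpan ℝ s) := by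
    have hg0 : g 0 = x' := Subtype.ext (by simp [hg, hxx])
    simpa [Set.mem_preimage, hg0] using hx'
  obtain ⟨δ, hδ, hball⟩ := Metric.isOpen_iff.1 hopen 0 h0
  refine ⟨δ/2, by positivity, ?_⟩
  have hb : g (δ/2) ∈ interior ((↑) ⁻¹' s : Set <| affineSpan ℝ s) := by
    apply hball
    simp only [Metric.mem_ball, Real.dist_eq, sub_zero]
    rw [abs_of_pos (by positivity)]; linarith
  exact (interior_subset hb : g (δ/2) ∈ (↑) ⁻¹' s)

/-- The submodule of vectors supported on `T`. -/
def suppSubmodule {n : ℕ} (T : Finset (Fin n)) : Submodule ℝ (Fin n → ℝ) where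
  carrier := {d | ∀ j, j ∉ T → d j = 0}
  add_mem' := fun ha hb j hj => by simp [ha j hj, hb j hj]
  zero_mem' := fun j hj => rfl
  smul_mem' := fun c d hd j hj => by simp [hd j hj]

lemma finrank_suppSubmodule_le {n : ℕ} (T : Finset (Fin n)) :
    Module.finrank ℝ (suppSubmodule T) ≤ T.card := by
  classical
  have hinj : Function.Injective
      ((LinearMap.funLeft ℝ ℝ (fun j : ↥T => (j : Fin n))).comp (suppSubmodule T).subtype) := by
    intro a b hab
    ext j
    by_cases hj : j ∈ T
    · exact congrFun hab ⟨j, hj⟩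
    · rw [a.2 j hj, b.2 j hj]
  calc Module.finrank ℝ (suppSubmodule T) ≤ Module.finrank ℝ (↥T → ℝ) :=
        LinearMap.finrank_le_finrank_of_injective hinj
    _ = T.card := by simp [Module.finrank_fintype_fun_eq_card]

/-- If `Q` is supported on `T`, its affine dimension is at most `|T|`. -/
lemma adim_le_supp {n : ℕ} (T : Finset (Fin n)) (Q : Set (Fin n → ℝ))
    (hsupp : ∀ y ∈ Q, ∀ j, j ∉ T → y j = 0) :
    Module.finrank ℝ (affineSpan ℝ Q).direction ≤ T.card := by
  have hsub : (affineSpan ℝ Q).direction ≤ suppSubmodule T := by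
    rw [direction_affineSpan, vectorSpan_def, Submodule.span_le]
    rintro d hd
    rw [Set.mem_vsub] at hd
    obtain ⟨y, hy, z, hz, rfl⟩ := hd
    intro j hj
    simp [vsub_eq_sub, hsupp y hy j hj, hsupp z hz j hj]
  exact le_trans (Submodule.finrank_mono hsub) (finrank_suppSubmodule_le T)

/-- If `Q` is supported on `T` and has constant coordinate sum, its affine dimension
is strictly less than `|T|`. -/
lemma adim_lt_of_const {n : ℕ} (T : Finset (Fin n)) (Q : Set (Fin n → ℝ)) (c : ℝ)
    (hsupp : ∀ y ∈ Q, ∀ j, j ∉ T → y j = 0)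
    (hconst : ∀ y ∈ Q, ∑ j, y j = c) (j₀ : Fin n) (hj₀ : j₀ ∈ T) :
    Module.finrank ℝ (affineSpan ℝ Q).direction < T.card := by
  classical
  set L : (Fin n → ℝ) →ₗ[ℝ] ℝ :=
    { toFun := fun d => ∑ j, d j
      map_add' := fun a b => by simp [Finset.sum_add_distrib]
      map_smul' := fun c a => by simp [Finset.mul_sum] } with hL
  have hsub : (affineSpan ℝ Q).direction ≤ suppSubmodule T ⊓ LinearMap.ker L := by
    rw [direction_affineSpan, vectorSpan_def, Submodule.span_le]
    rintro d hd
    rw [Set.mem_vsub] at hd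
    obtain ⟨y, hy, z, hz, rfl⟩ := hd
    rw [SetLike.mem_coe, Submodule.mem_inf]
    constructor
    · intro j hj
      simp [vsub_eq_sub, hsupp y hy j hj, hsupp z hz j hj]
    · have hLv : L (y -ᵥ z) = ∑ j, (y j - z j) := by simp [hL, vsub_eq_sub]
      rw [LinearMap.mem_ker, hLv, Finset.sum_sub_distrib, hconst y hy, hconst z hz, sub_self]
  have hlt : suppSubmodule T ⊓ LinearMap.ker L < suppSubmodule T := by
    rw [SetLike.lt_iff_le_and_exists]
    refine ⟨inf_le_left, Pi.single j₀ 1, ?_, ?_⟩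
    · intro j hj
      exact Pi.single_eq_of_ne (fun h => hj (by rw [h]; exact hj₀)) 1
    · simp only [Submodule.mem_inf, LinearMap.mem_ker, hL, LinearMap.coe_mk, AddHom.coe_mk]
      intro ⟨_, habs⟩
      rw [Finset.sum_pi_single'] at habs
      simp at habs
  calc Module.finrank ℝ (affineSpan ℝ Q).direction
      ≤ Module.finrank ℝ (suppSubmodule T ⊓ LinearMap.ker L : Submodule ℝ _) :=
        Submodule.finrank_mono hsub
    _ < Module.finrank ℝ (suppSubmodule T) := Submodule.finrank_lt_finrank_of_lt hlt
    _ ≤ T.card := finrank_suppSubmodule_le T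

/-- faces of the unimodular simplex Δ_n whose subsums satisfy
dim(P_I) ≥ |I| have hollow Minkowski subsums. -/
theorem hollow_subsums_of_faces_of_unimodular_simplex {n k : ℕ}
    (P : Fin k → Set (Fin n → ℝ))
    (hface : ∀ i, ∃ S : Set (Fin n → ℝ),
      S ⊆ insert 0 (Set.range fun i : Fin n => (Pi.single i 1 : Fin n → ℝ)) ∧
      S.Nonempty ∧ P i = convexHull ℝ S)
    (hdim : ∀ I : Finset (Fin k), I.Nonempty → I.card ≤ adim (∑ i ∈ I, P i)) :
    ∀ I : Finset (Fin k), I.Nonempty → relintLat (∑ i ∈ I, P i) = ∅ := by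
  classical
  intro I hI
  rw [Set.eq_empty_iff_forall_notMem]
  rintro x ⟨hxi, hxlat⟩
  set Q : Set (Fin n → ℝ) := ∑ i ∈ I, P i with hQ
  have hxQ : x ∈ Q := intrinsicInterior_subset hxi
  set m := I.card with hm
  -- each P i lies in the standard simplex
  have hC : ∀ i, P i ⊆ {y : Fin n → ℝ | (∀ j, 0 ≤ y j) ∧ ∑ j, y j ≤ 1} := by
    intro i
    obtain ⟨S, hS, _, hPS⟩ := hface i
    rw [hPS]
    apply convexHull_min
    · intro v hv
      rcases hS hv with hv0 | ⟨j, rfl⟩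
      · subst hv0; exact ⟨fun j => le_refl 0, by simp⟩
      · refine ⟨fun j' => ?_, ?_⟩
        · by_cases h : j' = j <;> simp [Pi.single_apply, h]
        · simp [Pi.single_apply]
    · rintro y ⟨hy1, hy2⟩ z ⟨hz1, hz2⟩ a b ha hb hab
      refine ⟨fun j => ?_, ?_⟩
      · have := hy1 j; have := hz1 j
        simp only [Pi.add_apply, Pi.smul_apply, smul_eq_mul]
        nlinarith
      · simp only [Pi.add_apply, Pi.smul_apply, smul_eq_mul]
        rw [Finset.sum_add_distrib, ← Finset.mul_sum, ← Finset.mul_sum]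
        nlinarith
  -- membership in Q gives nonneg coordinates summing to at most m
  have hQprop : ∀ y ∈ Q, (∀ j, 0 ≤ y j) ∧ ∑ j, y j ≤ (m : ℝ) := by
    intro y hy
    rw [hQ, Set.mem_finset_sum] at hy
    obtain ⟨g, hg, hsum⟩ := hy
    subst hsum
    constructor
    · intro j
      rw [Finset.sum_apply]
      exact Finset.sum_nonneg fun i hi => (hC i (hg hi)).1 j
    · calc ∑ j, (∑ i ∈ I, g i) j = ∑ i ∈ I, ∑ j, g i j := by
            simp only [Finset.sum_apply]; rw [Finset.sum_comm]
        _ ≤ ∑ _i ∈ I, (1:ℝ) := Finset.sum_le_sum fun i hi => (hC i (hg hi)).2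
        _ = (m : ℝ) := by simp [hm]
  -- the support of x
  set T : Finset (Fin n) := Finset.univ.filter (fun j => x j ≠ 0) with hT
  have hT1 : ∀ j ∈ T, 1 ≤ x j := by
    intro j hj
    obtain ⟨z, hz⟩ := hxlat j
    have h0 : 0 ≤ x j := (hQprop x hxQ).1 j
    have hne : x j ≠ 0 := (Finset.mem_filter.1 hj).2
    have hz0 : 0 ≤ z := by exact_mod_cast hz ▸ h0
    have hz1 : z ≠ 0 := by rintro rfl; simp at hz; exact hne hz
    have : (1:ℤ) ≤ z := lt_of_le_of_ne hz0 (Ne.symm hz1)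
    rw [hz]; exact_mod_cast this
  have hT0 : ∀ j, j ∉ T → x j = 0 := by
    intro j hj
    by_contra h
    exact hj (Finset.mem_filter.2 ⟨Finset.mem_univ j, h⟩)
  -- all of Q is supported on T
  have hsupp : ∀ y ∈ Q, ∀ j, j ∉ T → y j = 0 := by
    intro y hy j hj
    have hy0 : 0 ≤ y j := (hQprop y hy).1 j
    by_contra h
    have hypos : 0 < y j := lt_of_le_of_ne hy0 (Ne.symm h)
    obtain ⟨ε, hε, hmem⟩ := push_mem_aux hxi hy
    have := ((hQprop _ hmem).1 j)
    simp only [Pi.add_apply, Pi.smul_apply, Pi.sub_apply, smul_eq_mul, hT0 j hj] at this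
    nlinarith
  -- dimension bounds
  have hcard : m ≤ T.card := (hdim I hI).trans (adim_le_supp T Q hsupp)
  have hxbig : (T.card : ℝ) ≤ ∑ j, x j := by
    have hx' : ∑ j, x j = ∑ j ∈ T, x j := by
      rw [← Finset.sum_subset (Finset.subset_univ T)]
      intro j _ hj; exact hT0 j hj
    rw [hx']
    calc (T.card : ℝ) = ∑ _j ∈ T, (1:ℝ) := by simp
      _ ≤ ∑ j ∈ T, x j := Finset.sum_le_sum hT1
  have hxsum : ∑ j, x j = (m : ℝ) := by
    have h2 := (hQprop x hxQ).2
    have : (m : ℝ) ≤ (T.card : ℝ) := by exact_mod_cast hcard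
    linarith
  -- the coordinate sum is constant m on Q
  have hconst : ∀ y ∈ Q, ∑ j, y j = (m : ℝ) := by
    intro y hy
    by_contra h
    have hlt : ∑ j, y j < (m : ℝ) := lt_of_le_of_ne ((hQprop y hy).2) h
    obtain ⟨ε, hε, hmem⟩ := push_mem_aux hxi hy
    have h2 := (hQprop _ hmem).2
    have hz : ∑ j, (x + ε • (x - y)) j = ∑ j, x j + ε * (∑ j, x j - ∑ j, y j) := by
      simp only [Pi.add_apply, Pi.smul_apply, Pi.sub_apply, smul_eq_mul]
      rw [Finset.sum_add_distrib, ← Finset.mul_sum, Finset.sum_sub_distrib]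
    rw [hz, hxsum] at h2
    nlinarith
  -- T is nonempty since m ≥ 1
  have hmpos : 0 < m := Finset.card_pos.2 hI
  have hTne : T.Nonempty := Finset.card_pos.1 (lt_of_lt_of_le hmpos hcard)
  obtain ⟨j₀, hj₀⟩ := hTne
  -- final contradiction
  have hfinal := adim_lt_of_const T Q (m : ℝ) hsupp hconst j₀ hj₀
  have h1 : m ≤ adim Q := hdim I hI
  have h2 : adim Q < T.card := hfinal
  have h3 : (T.card : ℝ) ≤ (m : ℝ) := by rw [← hxsum]; exact hxbig
  have h4 : T.card ≤ m := by exact_mod_cast h3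
  omega
end

section
/- In R^2, let P_1 = conv(0, e_1), P_2 = conv(0, e_2), and P_3 = conv(0, e_1, e_2, e_1+e_2) be the unit square. Then for every nonempty subset I of {1,2,3} with |I| ≤ 2, the Minkowski sum P_I contains no lattice point in its relative interior, while P_1 + P_2 + P_3 does contain an interior lattice point. Hence mcd(P_1,P_2,P_3) = 3 and md(P_1,P_2,P_3) = 0. -/
open scoped Pointwise
open MeasureTheory Finset

/-- The mixed codegree: minimal cardinality of a nonempty subfamily whose Minkowski sum
has a lattice point in its relative interior, or m+1 if there is none. -/
noncomputable def mcd {n m : ℕ} (P : Fin m → Set (Fin n → ℝ)) : ℕ :=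
  sInf ({m + 1} ∪
    {c | ∃ I : Finset (Fin m), I.Nonempty ∧ I.card = c ∧
      (relintLat (∑ i ∈ I, P i)).Nonempty})

lemma push_lemma {n : ℕ} {S : Set (Fin n → ℝ)} {x y : Fin n → ℝ}
    (hx : x ∈ intrinsicInterior ℝ S) (hy : y ∈ S) :
    ∃ t : ℝ, 0 < t ∧ x + t • (x - y) ∈ S := by
  obtain ⟨x', hx', hxx⟩ := mem_intrinsicInterior.1 hx
  have hyS : y ∈ affineSpan ℝ S := subset_affineSpan ℝ S hy
  have hmem : ∀ t : ℝ, y + t • (x - y) ∈ affineSpan ℝ S := by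
    intro t
    have hxa : x ∈ affineSpan ℝ S := hxx ▸ x'.2
    have := AffineSubspace.smul_vsub_vadd_mem (affineSpan ℝ S) t hxa hyS hyS
    simpa [vsub_eq_sub, vadd_eq_add, add_comm] using this
  set γ : ℝ → affineSpan ℝ S := fun t => ⟨y + t • (x - y), hmem t⟩ with hγ
  have hcont : Continuous γ := by
    apply Continuous.subtype_mk
    fun_prop
  have h1 : γ 1 = x' := by
    apply Subtype.ext
    simp [hγ, hxx]
  have hopen : IsOpen (γ ⁻¹' interior ((↑) ⁻¹' S : Set (affineSpan ℝ S))) :=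
    isOpen_interior.preimage hcont
  have h1mem : (1 : ℝ) ∈ γ ⁻¹' interior ((↑) ⁻¹' S : Set (affineSpan ℝ S)) := by
    simp [Set.mem_preimage, h1, hx']
  obtain ⟨ε, hε, hball⟩ := Metric.isOpen_iff.1 hopen 1 h1mem
  have htball : (1 + ε / 2) ∈ Metric.ball (1 : ℝ) ε := by
    rw [Metric.mem_ball, Real.dist_eq, show (1 + ε / 2) - 1 = ε / 2 by ring,
      abs_of_pos (half_pos hε)]
    linarith
  have hγt := interior_subset (hball htball)
  refine ⟨ε / 2, half_pos hε, ?_⟩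
  have : y + (1 + ε / 2) • (x - y) ∈ S := hγt
  convert this using 1
  module

lemma no_max_relint {n : ℕ} {S : Set (Fin n → ℝ)} {x y : Fin n → ℝ} (i : Fin n)
    (hx : x ∈ intrinsicInterior ℝ S) (hub : ∀ z ∈ S, z i ≤ x i)
    (hy : y ∈ S) (hlt : y i < x i) : False := by
  obtain ⟨t, ht, hmem⟩ := push_lemma hx hy
  have h := hub _ hmem
  simp only [Pi.add_apply, Pi.smul_apply, Pi.sub_apply, smul_eq_mul] at h
  nlinarith

lemma no_min_relint {n : ℕ} {S : Set (Fin n → ℝ)} {x y : Fin n → ℝ} (i : Fin n)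
    (hx : x ∈ intrinsicInterior ℝ S) (hlb : ∀ z ∈ S, x i ≤ z i)
    (hy : y ∈ S) (hlt : x i < y i) : False := by
  obtain ⟨t, ht, hmem⟩ := push_lemma hx hy
  have h := hlb _ hmem
  simp only [Pi.add_apply, Pi.smul_apply, Pi.sub_apply, smul_eq_mul] at h
  nlinarith

lemma relint_empty_of_coord {n : ℕ} (S : Set (Fin n → ℝ)) (i : Fin n) (u v : Fin n → ℝ)
    (hu : u ∈ S) (hv : v ∈ S) (hui : u i = 0) (hvi : v i = 1)
    (hbd : ∀ w ∈ S, 0 ≤ w i ∧ w i ≤ 1) : relintLat S = ∅ := by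
  ext x
  simp only [relintLat, Set.mem_setOf_eq, Set.mem_empty_iff_false, iff_false, not_and]
  intro hint hlat
  have hxS : x ∈ S := intrinsicInterior_subset hint
  obtain ⟨hx0, hx1⟩ := hbd x hxS
  obtain ⟨z, hz⟩ := hlat i
  have hz01 : z = 0 ∨ z = 1 := by
    rw [hz] at hx0 hx1
    have h0 : (0 : ℤ) ≤ z := by exact_mod_cast hx0
    have h1 : z ≤ (1 : ℤ) := by exact_mod_cast hx1
    omega
  rcases hz01 with h | h
  · have hxi : x i = 0 := by rw [hz, h]; norm_num
    exact no_min_relint i hint (fun w hw => by rw [hxi]; exact (hbd w hw).1) hv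
      (by rw [hxi, hvi]; norm_num)
  · have hxi : x i = 1 := by rw [hz, h]; norm_num
    exact no_max_relint i hint (fun w hw => by rw [hxi]; exact (hbd w hw).2) hu
      (by rw [hui, hxi]; norm_num)

/-- the example P₁ = conv(0,e₁), P₂ = conv(0,e₂), P₃ = unit square in ℝ²
has mcd = 3 and md = 0. -/
theorem example_mcd_three_md_zero :
    ∀ P : Fin 3 → Set (Fin 2 → ℝ),
    P = ![convexHull ℝ {![0, 0], ![1, 0]},
          convexHull ℝ {![0, 0], ![0, 1]},
          convexHull ℝ {![0, 0], ![1, 0], ![0, 1], ![1, 1]}] →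
    (∀ I : Finset (Fin 3), I.Nonempty → I.card ≤ 2 →
        relintLat (∑ i ∈ I, P i) = ∅) ∧
    (intLat (∑ i, P i)).Nonempty ∧
    mcd P = 3 ∧
    (adim (∑ i, P i) : ℤ) + 1 - (mcd P : ℤ) = 0 := by
  intro P hP
  set A := convexHull ℝ ({![0, 0], ![1, 0]} : Set (Fin 2 → ℝ)) with hAdef
  set B := convexHull ℝ ({![0, 0], ![0, 1]} : Set (Fin 2 → ℝ)) with hBdef
  set C := convexHull ℝ ({![0, 0], ![1, 0], ![0, 1], ![1, 1]} : Set (Fin 2 → ℝ)) with hCdef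
  have hP0 : P 0 = A := by rw [hP]; rfl
  have hP1 : P 1 = B := by rw [hP]; rfl
  have hP2 : P 2 = C := by rw [hP]; rfl
  have h00A : ![0, 0] ∈ A := subset_convexHull ℝ _ (by simp)
  have h10A : ![1, 0] ∈ A := subset_convexHull ℝ _ (by simp)
  have h00B : ![0, 0] ∈ B := subset_convexHull ℝ _ (by simp)
  have h01B : ![0, 1] ∈ B := subset_convexHull ℝ _ (by simp)
  have h00C : ![0, 0] ∈ C := subset_convexHull ℝ _ (by simp)
  have h10C : ![1, 0] ∈ C := subset_convexHull ℝ _ (by simp)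
  have h01C : ![0, 1] ∈ C := subset_convexHull ℝ _ (by simp)
  have addmem : ∀ {S T : Set (Fin 2 → ℝ)} {a b c : Fin 2 → ℝ},
      a ∈ S → b ∈ T → a + b = c → c ∈ S + T :=
    fun h1 h2 h3 => h3 ▸ Set.add_mem_add h1 h2
  -- coordinate bounds
  have hA : A ⊆ {z : Fin 2 → ℝ | (0 ≤ z 0 ∧ z 0 ≤ 1) ∧ z 1 = 0} := by
    apply convexHull_min
    · intro w hw
      simp only [Set.mem_insert_iff, Set.mem_singleton_iff] at hw
      rcases hw with rfl | rfl <;> norm_num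
    · rintro u hu v hv a b ha hb hab
      simp only [Set.mem_setOf_eq, Pi.add_apply, Pi.smul_apply, smul_eq_mul] at *
      exact ⟨⟨by nlinarith, by nlinarith⟩, by nlinarith⟩
  have hB : B ⊆ {z : Fin 2 → ℝ | z 0 = 0 ∧ (0 ≤ z 1 ∧ z 1 ≤ 1)} := by
    apply convexHull_min
    · intro w hw
      simp only [Set.mem_insert_iff, Set.mem_singleton_iff] at hw
      rcases hw with rfl | rfl <;> norm_num
    · rintro u hu v hv a b ha hb hab
      simp only [Set.mem_setOf_eq, Pi.add_apply, Pi.smul_apply, smul_eq_mul] at *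
      exact ⟨by nlinarith, ⟨by nlinarith, by nlinarith⟩⟩
  have hC : C ⊆ {z : Fin 2 → ℝ | (0 ≤ z 0 ∧ z 0 ≤ 1) ∧ (0 ≤ z 1 ∧ z 1 ≤ 1)} := by
    apply convexHull_min
    · intro w hw
      simp only [Set.mem_insert_iff, Set.mem_singleton_iff] at hw
      rcases hw with rfl | rfl | rfl | rfl <;> norm_num
    · rintro u hu v hv a b ha hb hab
      simp only [Set.mem_setOf_eq, Pi.add_apply, Pi.smul_apply, smul_eq_mul] at *
      exact ⟨⟨by nlinarith, by nlinarith⟩, ⟨by nlinarith, by nlinarith⟩⟩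
  have hcases : ∀ I : Finset (Fin 3), I.Nonempty → I.card ≤ 2 →
      I = {0} ∨ I = {1} ∨ I = {2} ∨ I = {0, 1} ∨ I = {0, 2} ∨ I = {1, 2} := by decide
  have part1 : ∀ I : Finset (Fin 3), I.Nonempty → I.card ≤ 2 →
      relintLat (∑ i ∈ I, P i) = ∅ := by
    intro I hne hcard
    rcases hcases I hne hcard with rfl | rfl | rfl | rfl | rfl | rfl
    · rw [Finset.sum_singleton, hP0]
      exact relint_empty_of_coord A 0 ![0, 0] ![1, 0] h00A h10A (by norm_num) (by norm_num)
        (fun w hw => (hA hw).1)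
    · rw [Finset.sum_singleton, hP1]
      exact relint_empty_of_coord B 1 ![0, 0] ![0, 1] h00B h01B (by norm_num) (by norm_num)
        (fun w hw => (hB hw).2)
    · rw [Finset.sum_singleton, hP2]
      exact relint_empty_of_coord C 0 ![0, 0] ![1, 0] h00C h10C (by norm_num) (by norm_num)
        (fun w hw => (hC hw).1)
    · rw [Finset.sum_pair (by decide), hP0, hP1]
      refine relint_empty_of_coord (A + B) 0 ![0, 0] ![1, 0]
        (addmem h00A h00B (by funext i; fin_cases i <;> simp))
        (addmem h10A h00B (by funext i; fin_cases i <;> simp))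
        (by norm_num) (by norm_num) ?_
      intro w hw
      rcases Set.mem_add.1 hw with ⟨a, ha, b, hb, rfl⟩
      have h1 := (hA ha).1
      have h2 := (hB hb).1
      constructor <;> simp only [Pi.add_apply] <;> [linarith [h1.1]; linarith [h1.2]]
    · rw [Finset.sum_pair (by decide), hP0, hP2]
      refine relint_empty_of_coord (A + C) 1 ![0, 0] ![0, 1]
        (addmem h00A h00C (by funext i; fin_cases i <;> simp))
        (addmem h00A h01C (by funext i; fin_cases i <;> simp))
        (by norm_num) (by norm_num) ?_
      intro w hw
      rcases Set.mem_add.1 hw with ⟨a, ha, c, hc, rfl⟩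
      have h1 := (hA ha).2
      have h2 := (hC hc).2
      constructor <;> simp only [Pi.add_apply] <;> [linarith [h2.1]; linarith [h2.2]]
    · rw [Finset.sum_pair (by decide), hP1, hP2]
      refine relint_empty_of_coord (B + C) 0 ![0, 0] ![1, 0]
        (addmem h00B h00C (by funext i; fin_cases i <;> simp))
        (addmem h00B h10C (by funext i; fin_cases i <;> simp))
        (by norm_num) (by norm_num) ?_
      intro w hw
      rcases Set.mem_add.1 hw with ⟨b, hb, c, hc, rfl⟩
      have h1 := (hB hb).1
      have h2 := (hC hc).1
      constructor <;> simp only [Pi.add_apply] <;> [linarith [h2.1]; linarith [h2.2]]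
  -- full sum
  have hSfull : ∑ i, P i = A + B + C := by
    rw [Fin.sum_univ_three, hP0, hP1, hP2]
  have memA : ∀ s : ℝ, 0 ≤ s → s ≤ 1 → ![s, 0] ∈ A := by
    intro s h0 h1
    rw [hAdef, convexHull_pair]
    exact ⟨1 - s, s, by linarith, h0, by ring, by funext i; fin_cases i <;> simp⟩
  have memB : ∀ t : ℝ, 0 ≤ t → t ≤ 1 → ![0, t] ∈ B := by
    intro t h0 h1
    rw [hBdef, convexHull_pair]
    exact ⟨1 - t, t, by linarith, h0, by ring, by funext i; fin_cases i <;> simp⟩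
  have memC : ∀ s t : ℝ, 0 ≤ s → s ≤ 1 → 0 ≤ t → t ≤ 1 → ![s, t] ∈ C := by
    intro s t hs0 hs1 ht0 ht1
    have hp : ![s, 0] ∈ C :=
      convexHull_mono (by intro z hz; simp at hz ⊢; tauto) (memA s hs0 hs1)
    have hq : ![s, 1] ∈ C := by
      have : ![s, 1] ∈ convexHull ℝ ({![0, 1], ![1, 1]} : Set (Fin 2 → ℝ)) := by
        rw [convexHull_pair]
        exact ⟨1 - s, s, by linarith, hs0, by ring, by funext i; fin_cases i <;> simp⟩
      exact convexHull_mono (by intro z hz; simp at hz ⊢; tauto) this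
    have hconv := (convex_convexHull ℝ ({![0, 0], ![1, 0], ![0, 1], ![1, 1]} : Set (Fin 2 → ℝ)))
      hp hq (by linarith : (0:ℝ) ≤ 1 - t) ht0 (by ring)
    convert hconv using 1
    funext i; fin_cases i <;> simp <;> ring
  have hUsub : {y : Fin 2 → ℝ | (0 < y 0 ∧ y 0 < 2) ∧ (0 < y 1 ∧ y 1 < 2)} ⊆ A + B + C := by
    rintro y ⟨⟨hy0, hy0'⟩, hy1, hy1'⟩
    refine addmem (addmem (memA (y 0 / 2) (by linarith) (by linarith))
      (memB (y 1 / 2) (by linarith) (by linarith)) rfl)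
      (memC (y 0 / 2) (y 1 / 2) (by linarith) (by linarith) (by linarith) (by linarith)) ?_
    funext i; fin_cases i <;> simp <;> ring
  have hUopen : IsOpen {y : Fin 2 → ℝ | (0 < y 0 ∧ y 0 < 2) ∧ (0 < y 1 ∧ y 1 < 2)} := by
    have heq : {y : Fin 2 → ℝ | (0 < y 0 ∧ y 0 < 2) ∧ (0 < y 1 ∧ y 1 < 2)} =
        ((fun y : Fin 2 → ℝ => y 0) ⁻¹' Set.Ioo 0 2) ∩
        ((fun y : Fin 2 → ℝ => y 1) ⁻¹' Set.Ioo 0 2) := by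
      ext y; simp [Set.mem_Ioo]
    rw [heq]
    exact (isOpen_Ioo.preimage (continuous_apply 0)).inter
      (isOpen_Ioo.preimage (continuous_apply 1))
  have hint : ![1, 1] ∈ interior (∑ i, P i) := by
    rw [hSfull]
    exact interior_maximal hUsub hUopen (by norm_num)
  have lat11 : IsLatticePt ![1, 1] := by
    intro i; fin_cases i <;> exact ⟨1, by norm_num⟩
  have part2 : (intLat (∑ i, P i)).Nonempty := ⟨![1, 1], hint, lat11⟩
  have h3mem : 3 ∈ ({3 + 1} ∪
      {c | ∃ I : Finset (Fin 3), I.Nonempty ∧ I.card = c ∧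
        (relintLat (∑ i ∈ I, P i)).Nonempty} : Set ℕ) := by
    right
    exact ⟨Finset.univ, Finset.univ_nonempty, by decide,
      ⟨![1, 1], interior_subset_intrinsicInterior hint, lat11⟩⟩
  have hmcd : mcd P = 3 := by
    unfold mcd
    apply le_antisymm
    · exact Nat.sInf_le h3mem
    · apply le_csInf ⟨3, h3mem⟩
      rintro k (hk | ⟨I, hne, hcard, hrel⟩)
      · simp only [Set.mem_singleton_iff] at hk; omega
      · by_contra hlt
        push_neg at hlt
        have hI2 : I.card ≤ 2 := by omega
        rw [part1 I hne hI2] at hrel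
        exact Set.not_nonempty_empty hrel
  have hadim : adim (∑ i, P i) = 2 := by
    have hspan : affineSpan ℝ (∑ i, P i) = ⊤ := by
      apply affineSpan_eq_top_of_nonempty_interior
      exact ⟨![1, 1], interior_mono (subset_convexHull ℝ _) hint⟩
    unfold adim
    rw [hspan, AffineSubspace.direction_top, finrank_top, Module.finrank_fin_fun]
  exact ⟨part1, part2, hmcd, by rw [hmcd, hadim]; norm_num⟩
end
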